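/- Define vector fields on C^3 (coordinates x, y, u) by e1 = -x∂x + y∂y, e2 = x∂x + u∂u, e3 = ∂x + y∂u, e4 = ∂y + x∂u. Then each of e1, e2, e3, e4 is tangent to the quadric {u = x*y}, and the Lie brackets satisfy [e1,e2] = 0, [e1,e3] = e3, [e1,e4] = -e4, [e2,e3] = -e3, forming a 4-dimensional solvable Lie algebra. -/

import Mathlib

/-- Lie bracket of vector fields on ℂ³, viewed as smooth maps ℂ³ → ℂ³:
`[V,W](p) = DW(p)(V(p)) - DV(p)(W(p))`. -/
noncomputable def lieBracket (V W : ℂ × ℂ × ℂ → ℂ × ℂ × ℂ) :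
    ℂ × ℂ × ℂ → ℂ × ℂ × ℂ :=
  fun p => fderiv ℂ W p (V p) - fderiv ℂ V p (W p)

/-- `e1 = -x∂x + y∂y`. -/
noncomputable def e1 : ℂ × ℂ × ℂ → ℂ × ℂ × ℂ := fun p => (-p.1, p.2.1, 0)

/-- `e2 = x∂x + u∂u`. -/
noncomputable def e2 : ℂ × ℂ × ℂ → ℂ × ℂ × ℂ := fun p => (p.1, 0, p.2.2)

/-- `e3 = ∂x + y∂u`. -/
noncomputable def e3 : ℂ × ℂ × ℂ → ℂ × ℂ × ℂ := fun p => (1, 0, p.2.1)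

/-- `e4 = ∂y + x∂u`. -/
noncomputable def e4 : ℂ × ℂ × ℂ → ℂ × ℂ × ℂ := fun p => (0, 1, p.1)

/-- Tangency of a vector field `a∂x + b∂y + c∂u` to the quadric `{u = x*y}`:
`c - a*F_x - b*F_y = 0` on the graph, with `F_x = y`, `F_y = x`. -/
def tangentToQuadric (e : ℂ × ℂ × ℂ → ℂ × ℂ × ℂ) : Prop :=
  ∀ p : ℂ × ℂ × ℂ, p.2.2 = p.1 * p.2.1 →
    (e p).2.2 - (e p).1 * p.2.1 - (e p).2.1 * p.1 = 0


open ContinuousLinearMap in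
noncomputable def L1 : ℂ × ℂ × ℂ →L[ℂ] ℂ × ℂ × ℂ :=
  (-(fst ℂ ℂ (ℂ × ℂ))).prod (((fst ℂ ℂ ℂ).comp (snd ℂ ℂ (ℂ × ℂ))).prod 0)

open ContinuousLinearMap in
noncomputable def L2 : ℂ × ℂ × ℂ →L[ℂ] ℂ × ℂ × ℂ :=
  (fst ℂ ℂ (ℂ × ℂ)).prod ((0 : ℂ × ℂ × ℂ →L[ℂ] ℂ).prod
    ((snd ℂ ℂ ℂ).comp (snd ℂ ℂ (ℂ × ℂ))))

open ContinuousLinearMap in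
noncomputable def L3 : ℂ × ℂ × ℂ →L[ℂ] ℂ × ℂ × ℂ :=
  (0 : ℂ × ℂ × ℂ →L[ℂ] ℂ).prod ((0 : ℂ × ℂ × ℂ →L[ℂ] ℂ).prod
    ((fst ℂ ℂ ℂ).comp (snd ℂ ℂ (ℂ × ℂ))))

open ContinuousLinearMap in
noncomputable def L4 : ℂ × ℂ × ℂ →L[ℂ] ℂ × ℂ × ℂ :=
  (0 : ℂ × ℂ × ℂ →L[ℂ] ℂ).prod ((0 : ℂ × ℂ × ℂ →L[ℂ] ℂ).prod (fst ℂ ℂ (ℂ × ℂ)))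

lemma fderiv_e1 (p : ℂ × ℂ × ℂ) : fderiv ℂ e1 p = L1 := by
  have : e1 = ⇑L1 := by funext q; rfl
  rw [this, ContinuousLinearMap.fderiv]

lemma fderiv_e2 (p : ℂ × ℂ × ℂ) : fderiv ℂ e2 p = L2 := by
  have : e2 = ⇑L2 := by funext q; rfl
  rw [this, ContinuousLinearMap.fderiv]

lemma fderiv_e3 (p : ℂ × ℂ × ℂ) : fderiv ℂ e3 p = L3 := by
  have h : HasFDerivAt e3 L3 p := by
    have : e3 = fun q => ((1 : ℂ), (0 : ℂ), (0 : ℂ)) + L3 q := by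
      funext q; simp [e3, L3, Prod.ext_iff]
    rw [this]
    simpa using L3.hasFDerivAt
  exact h.fderiv

lemma fderiv_e4 (p : ℂ × ℂ × ℂ) : fderiv ℂ e4 p = L4 := by
  have h : HasFDerivAt e4 L4 p := by
    have : e4 = fun q => ((0 : ℂ), (1 : ℂ), (0 : ℂ)) + L4 q := by
      funext q; simp [e4, L4, Prod.ext_iff]
    rw [this]
    simpa using L4.hasFDerivAt
  exact h.fderiv

theorem quadric_symmetries :
    tangentToQuadric e1 ∧ tangentToQuadric e2 ∧
    tangentToQuadric e3 ∧ tangentToQuadric e4 ∧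
    lieBracket e1 e2 = 0 ∧
    lieBracket e1 e3 = e3 ∧
    (lieBracket e1 e4 = fun p => -(e4 p)) ∧
    (lieBracket e2 e3 = fun p => -(e3 p)) := by
  refine ⟨?_, ?_, ?_, ?_, ?_, ?_, ?_, ?_⟩
  · intro p hp; simp [e1]; try ring
  · intro p hp; simp [e2, hp]; try ring
  · intro p hp; simp [e3]; try ring
  · intro p hp; simp [e4]; try ring
  · funext p
    simp [lieBracket, fderiv_e1, fderiv_e2, L1, L2, e1, e2, Prod.ext_iff]
  · funext p
    simp [lieBracket, fderiv_e1, fderiv_e3, L1, L3, e1, e3, Prod.ext_iff]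
  · funext p
    simp [lieBracket, fderiv_e1, fderiv_e4, L1, L4, e1, e4, Prod.ext_iff]
  · funext p
    simp [lieBracket, fderiv_e2, fderiv_e3, L2, L3, e2, e3, Prod.ext_iff]
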